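/- arXiv:2604.25956 — 10 statements merged into one kernel-verified Lean document; each statement's English description precedes it below -/
import Mathlib

section
/- Let n be a positive integer. There exist pairwise distinct, pairwise coprime, positive integers x, y, z with n = x + y + z if and only if n = 6 or n ≥ 8. -/
private lemma cop_of_prime_not_dvd {p k : ℕ} (hp : p.Prime) (h : ¬ p ∣ k) :
    Nat.gcd p k = 1 := (hp.coprime_iff_not_dvd.mpr h)

theorem stmt0 (n : ℕ) (hn : 0 < n) :
    (∃ x y z : ℕ, 0 < x ∧ 0 < y ∧ 0 < z ∧ x ≠ y ∧ y ≠ z ∧ x ≠ z ∧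
      Nat.gcd x y = 1 ∧ Nat.gcd y z = 1 ∧ Nat.gcd x z = 1 ∧ n = x + y + z) ↔
    (n = 6 ∨ 8 ≤ n) := by
  constructor
  · rintro ⟨x, y, z, hx, hy, hz, hxy, hyz, hxz, h1, h2, h3, hsum⟩
    by_contra hc
    push_neg at hc
    obtain ⟨hc6, hc8⟩ := hc
    have hn7 : n ≤ 7 := by omega
    have hxb : x ≤ 7 := by omega
    have hyb : y ≤ 7 := by omega
    have hzb : z ≤ 7 := by omega
    interval_cases x <;> interval_cases y <;> interval_cases z <;> simp_all
  · rintro (rfl | h8)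
    · exact ⟨1, 2, 3, by norm_num⟩
    · rcases Nat.even_or_odd n with he | ho
      · refine ⟨1, 2, n - 3, by norm_num, by norm_num, by omega, by norm_num, by omega,
          by omega, by norm_num, ?_, by norm_num, by omega⟩
        exact cop_of_prime_not_dvd Nat.prime_two (by obtain ⟨k, hk⟩ := he; omega)
      · obtain ⟨m, hm⟩ := ho
        by_cases h3 : 3 ∣ (n - 4)
        · by_cases h5 : 5 ∣ (n - 6)
          · -- n ≡ 1 mod 3, n ≡ 1 mod 5, n odd → n ≥ 31; use (5, 9, n-14)
            have hn31 : 31 ≤ n := by omega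
            refine ⟨5, 9, n - 14, by norm_num, by norm_num, by omega, by norm_num,
              by omega, by omega, by norm_num, ?_, ?_, by omega⟩
            · have : Nat.gcd 3 (n - 14) = 1 :=
                cop_of_prime_not_dvd Nat.prime_three (by omega)
              have h9 : Nat.Coprime 9 (n - 14) := by
                have : Nat.Coprime 3 (n - 14) := this
                simpa using this.pow_left 2
              exact h9
            · exact cop_of_prime_not_dvd (by norm_num) (by omega)
          · -- use (1, 5, n-6)
            refine ⟨1, 5, n - 6, by norm_num, by norm_num, by omega, by norm_num,
              by omega, by omega, by norm_num, ?_, by simp, by omega⟩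
            exact cop_of_prime_not_dvd (by norm_num) h5
        · -- use (1, 3, n-4)
          refine ⟨1, 3, n - 4, by norm_num, by norm_num, by omega, by norm_num,
            by omega, by omega, by norm_num, ?_, by simp, by omega⟩
          exact cop_of_prime_not_dvd Nat.prime_three h3
end

section
/- Let n be a positive integer. There exist pairwise coprime positive integers x, y, z, none divisible by 3, such that n = x + y + z, if and only if n ≥ 3 and n ∉ {5, 11}. -/
lemma aux_gcd_eq_one (a b : ℕ) (h12 : Nat.gcd a b ∣ 12) (h2 : ¬ 2 ∣ Nat.gcd a b)
    (h3 : ¬ 3 ∣ Nat.gcd a b) : Nat.gcd a b = 1 := by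
  have h1 : Nat.gcd a b ≤ 12 := Nat.le_of_dvd (by norm_num) h12
  set g := Nat.gcd a b with hg
  clear_value g
  interval_cases g <;> omega

-- gcd with an odd number, where the first argument divides 4
lemma aux_gcd4 (k m : ℕ) (hk : k ∣ 4) (hm : ¬ 2 ∣ m) : Nat.gcd k m = 1 := by
  apply aux_gcd_eq_one
  · exact dvd_trans (Nat.gcd_dvd_left k m) (dvd_trans hk (by norm_num))
  · intro h
    exact hm (dvd_trans h (Nat.gcd_dvd_right k m))
  · intro h
    have h4 : (3:ℕ) ∣ k := dvd_trans h (Nat.gcd_dvd_left k m)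
    have := Nat.le_of_dvd (by norm_num) hk
    interval_cases k <;> omega

-- gcd of y and y + d where d ∣ 12, y odd and not divisible by 3
lemma aux_gcd_add (y d : ℕ) (hd : d ∣ 12) (h2 : ¬ 2 ∣ y) (h3 : ¬ 3 ∣ y) :
    Nat.gcd y (y + d) = 1 := by
  have hdl := Nat.gcd_dvd_left y (y + d)
  have hdr := Nat.gcd_dvd_right y (y + d)
  have hdd : Nat.gcd y (y + d) ∣ d := by
    have := Nat.dvd_sub hdr hdl
    simpa using this
  apply aux_gcd_eq_one
  · exact dvd_trans hdd hd
  · intro h; exact h2 (dvd_trans h hdl)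
  · intro h; exact h3 (dvd_trans h hdl)

theorem stmt1 (n : ℕ) (hn : 0 < n) :
    (∃ x y z : ℕ, 0 < x ∧ 0 < y ∧ 0 < z ∧ ¬ 3 ∣ x ∧ ¬ 3 ∣ y ∧ ¬ 3 ∣ z ∧
      Nat.gcd x y = 1 ∧ Nat.gcd y z = 1 ∧ Nat.gcd x z = 1 ∧ n = x + y + z) ↔
    (3 ≤ n ∧ n ≠ 5 ∧ n ≠ 11) := by
  constructor
  · rintro ⟨x, y, z, hx, hy, hz, h3x, h3y, h3z, g1, g2, g3, hs⟩
    refine ⟨by omega, ?_, ?_⟩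
    · rintro rfl
      have hx9 : x ≤ 3 := by omega
      have hy9 : y ≤ 3 := by omega
      have hz9 : z ≤ 3 := by omega
      interval_cases x <;> interval_cases y <;> interval_cases z <;>
        first | omega | (revert g1 g2 g3; decide)
    · rintro rfl
      have hx9 : x ≤ 9 := by omega
      have hy9 : y ≤ 9 := by omega
      have hz9 : z ≤ 9 := by omega
      interval_cases x <;> interval_cases y <;> interval_cases z <;>
        first | omega | (revert g1 g2 g3; decide)
  · rintro ⟨h3, h5, h11⟩
    have hr : n % 12 = 0 ∨ n % 12 = 1 ∨ n % 12 = 2 ∨ n % 12 = 3 ∨ n % 12 = 4 ∨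
        n % 12 = 5 ∨ n % 12 = 6 ∨ n % 12 = 7 ∨ n % 12 = 8 ∨ n % 12 = 9 ∨
        n % 12 = 10 ∨ n % 12 = 11 := by omega
    -- three template constructions
    -- (1,1,n-2) for n odd, n % 3 ≠ 2
    have T1 : n % 2 = 1 → n % 3 ≠ 2 → n ≥ 3 →
        (∃ x y z : ℕ, 0 < x ∧ 0 < y ∧ 0 < z ∧ ¬ 3 ∣ x ∧ ¬ 3 ∣ y ∧ ¬ 3 ∣ z ∧
          Nat.gcd x y = 1 ∧ Nat.gcd y z = 1 ∧ Nat.gcd x z = 1 ∧ n = x + y + z) :=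
      fun ho hm hge =>
      ⟨1, 1, n - 2, by omega, by omega, by omega, by omega, by omega, by omega,
        by simp, by simp, by simp, by omega⟩
    -- (1,2,n-3) for n even, n % 3 ≠ 0
    have T2 : n % 2 = 0 → n % 3 ≠ 0 → n ≥ 4 →
        (∃ x y z : ℕ, 0 < x ∧ 0 < y ∧ 0 < z ∧ ¬ 3 ∣ x ∧ ¬ 3 ∣ y ∧ ¬ 3 ∣ z ∧
          Nat.gcd x y = 1 ∧ Nat.gcd y z = 1 ∧ Nat.gcd x z = 1 ∧ n = x + y + z) :=
      fun ho hm hge =>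
      ⟨1, 2, n - 3, by omega, by omega, by omega, by omega, by omega, by omega,
        by simp, aux_gcd4 2 (n - 3) (by norm_num) (by omega), by simp, by omega⟩
    -- (1,4,n-5) for n even, n % 3 = 0
    have T3 : n % 2 = 0 → n % 3 = 0 → n ≥ 6 →
        (∃ x y z : ℕ, 0 < x ∧ 0 < y ∧ 0 < z ∧ ¬ 3 ∣ x ∧ ¬ 3 ∣ y ∧ ¬ 3 ∣ z ∧
          Nat.gcd x y = 1 ∧ Nat.gcd y z = 1 ∧ Nat.gcd x z = 1 ∧ n = x + y + z) :=
      fun ho hm hge =>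
      ⟨1, 4, n - 5, by omega, by omega, by omega, by omega, by omega, by omega,
        by simp, aux_gcd4 4 (n - 5) (by norm_num) (by omega), by simp, by omega⟩
    rcases hr with h | h | h | h | h | h | h | h | h | h | h | h
    · exact T3 (by omega) (by omega) (by omega)
    · exact T1 (by omega) (by omega) (by omega)
    · exact T2 (by omega) (by omega) (by omega)
    · exact T1 (by omega) (by omega) (by omega)
    · exact T2 (by omega) (by omega) (by omega)
    · -- n ≡ 5 mod 12, n ≠ 5 so n ≥ 17: use (1, (n-7)/2, (n-7)/2 + 6)
      clear T1 T2 T3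
      refine ⟨1, (n - 7) / 2, (n - 7) / 2 + 6, by omega, by omega, by omega,
        by omega, by omega, by omega, by simp, ?_, by simp, by omega⟩
      exact aux_gcd_add _ 6 (by norm_num) (by omega) (by omega)
    · exact T3 (by omega) (by omega) (by omega)
    · exact T1 (by omega) (by omega) (by omega)
    · exact T2 (by omega) (by omega) (by omega)
    · exact T1 (by omega) (by omega) (by omega)
    · exact T2 (by omega) (by omega) (by omega)
    · -- n ≡ 11 mod 12, n ≠ 11 so n ≥ 23: use (1, (n-13)/2, (n-13)/2 + 12)
      clear T1 T2 T3
      refine ⟨1, (n - 13) / 2, (n - 13) / 2 + 12, by omega, by omega, by omega,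
        by omega, by omega, by omega, by simp, ?_, by simp, by omega⟩
      exact aux_gcd_add _ 12 (by norm_num) (by omega) (by omega)
end

section
/- Let V₀, V₁, V₂ ∈ ℤ² be the vertices of a lattice triangle, and for i = 0,1,2 let ℓᵢ be the lattice length of the side joining V_{i+1} and V_{i+2} (indices mod 3), i.e., ℓᵢ = gcd of the coordinate differences of those two vertices. Then gcd(ℓᵢ, ℓⱼ) = gcd(ℓ₀, ℓ₁, ℓ₂) for all i ≠ j. -/
/-- Lattice length of the segment joining two lattice points. -/
def llen (P Q : ℤ × ℤ) : ℕ := Int.gcd (P.1 - Q.1) (P.2 - Q.2)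

/-- Integer dot product on `ℤ × ℤ`. -/
def dotv (u v : ℤ × ℤ) : ℤ := u.1 * v.1 + u.2 * v.2

/-- The three vertices are not collinear (a genuine triangle). -/
def Noncollinear (V₀ V₁ V₂ : ℤ × ℤ) : Prop :=
  (V₁.1 - V₀.1) * (V₂.2 - V₀.2) - (V₂.1 - V₀.1) * (V₁.2 - V₀.2) ≠ 0

/-- All three interior angles are strictly acute (positive dot products at each vertex). -/
def IsAcute (V₀ V₁ V₂ : ℤ × ℤ) : Prop :=
  0 < dotv (V₁ - V₀) (V₂ - V₀) ∧ 0 < dotv (V₀ - V₁) (V₂ - V₁) ∧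
    0 < dotv (V₀ - V₂) (V₁ - V₂)

/-- `H` is the orthocenter of the triangle `V₀V₁V₂`. -/
def IsOrthocenter (H V₀ V₁ V₂ : ℤ × ℤ) : Prop :=
  dotv (H - V₀) (V₁ - V₂) = 0 ∧ dotv (H - V₁) (V₂ - V₀) = 0 ∧
    dotv (H - V₂) (V₀ - V₁) = 0

/-- `F` is the circumcenter of the triangle `V₀V₁V₂` (equidistant from the vertices). -/
def IsCircumcenter (F V₀ V₁ V₂ : ℤ × ℤ) : Prop :=
  dotv (F - V₀) (F - V₀) = dotv (F - V₁) (F - V₁) ∧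
    dotv (F - V₀) (F - V₀) = dotv (F - V₂) (F - V₂)

/-- Lattice perimeter of a lattice triangle. -/
def latPerim (V₀ V₁ V₂ : ℤ × ℤ) : ℕ := llen V₀ V₁ + llen V₁ V₂ + llen V₀ V₂

/-- The interior angle of the triangle at vertex `V`, with the other vertices `A`, `B`. -/
noncomputable def angleAt (V A B : ℤ × ℤ) : ℝ :=
  Real.arccos ((((A.1 - V.1) * (B.1 - V.1) + (A.2 - V.2) * (B.2 - V.2) : ℤ) : ℝ) /
    (Real.sqrt (((A.1 - V.1) ^ 2 + (A.2 - V.2) ^ 2 : ℤ)) *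
      Real.sqrt (((B.1 - V.1) ^ 2 + (B.2 - V.2) ^ 2 : ℤ))))

/-! The coordinate differences along the three sides sum to zero, so a common divisor of two
lattice lengths divides the third; hence every pairwise gcd already equals the gcd of all three. -/

theorem llen_comm (P Q : ℤ × ℤ) : llen P Q = llen Q P := by
  simp only [llen, ← neg_sub P.1, ← neg_sub P.2, Int.gcd_neg, Int.neg_gcd]

theorem gcd_llen_dvd_llen (P Q R : ℤ × ℤ) : Nat.gcd (llen P Q) (llen Q R) ∣ llen P R := by
  have hPQ := Int.dvd_gcd_iff.mp (Nat.gcd_dvd_left (llen P Q) (llen Q R))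
  have hQR := Int.dvd_gcd_iff.mp (Nat.gcd_dvd_right (llen P Q) (llen Q R))
  refine Int.dvd_gcd_iff.mpr ⟨?_, ?_⟩
  · rw [← sub_add_sub_cancel P.1 Q.1 R.1]; exact dvd_add hPQ.1 hQR.1
  · rw [← sub_add_sub_cancel P.2 Q.2 R.2]; exact dvd_add hPQ.2 hQR.2

theorem Nat.gcd_eq_gcd_gcd_of_gcd_dvd {a b c : ℕ} (h : Nat.gcd a b ∣ c) :
    Nat.gcd a b = Nat.gcd a (Nat.gcd b c) := by
  rw [← Nat.gcd_assoc, Nat.gcd_eq_left h]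

theorem stmt2_general (V : Fin 3 → ℤ × ℤ)
    (ℓ : Fin 3 → ℕ) (hℓ : ∀ i, ℓ i = llen (V (i + 1)) (V (i + 2))) :
    ∀ i j, i ≠ j → Nat.gcd (ℓ i) (ℓ j) = Nat.gcd (ℓ 0) (Nat.gcd (ℓ 1) (ℓ 2)) := by
  obtain ⟨h0, h1, h2⟩ : ℓ 0 = llen (V 1) (V 2) ∧ ℓ 1 = llen (V 2) (V 0) ∧
      ℓ 2 = llen (V 0) (V 1) := ⟨hℓ 0, hℓ 1, hℓ 2⟩
  have h01 : Nat.gcd (ℓ 0) (ℓ 1) ∣ ℓ 2 := by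
    rw [h0, h1, h2, llen_comm (V 0)]; exact gcd_llen_dvd_llen _ _ _
  have h02 : Nat.gcd (ℓ 0) (ℓ 2) ∣ ℓ 1 := by
    rw [h0, h1, h2, Nat.gcd_comm, llen_comm (V 2)]; exact gcd_llen_dvd_llen _ _ _
  have h12 : Nat.gcd (ℓ 1) (ℓ 2) ∣ ℓ 0 := by
    rw [h0, h1, h2, llen_comm (V 1)]; exact gcd_llen_dvd_llen _ _ _
  intro i j hij
  match i, j, hij with
  | 0, 1, _ => exact Nat.gcd_eq_gcd_gcd_of_gcd_dvd h01
  | 0, 2, _ => rw [Nat.gcd_eq_gcd_gcd_of_gcd_dvd h02]; ac_rfl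
  | 1, 0, _ => rw [Nat.gcd_comm, Nat.gcd_eq_gcd_gcd_of_gcd_dvd h01]
  | 1, 2, _ => rw [Nat.gcd_eq_gcd_gcd_of_gcd_dvd h12]; ac_rfl
  | 2, 0, _ => rw [Nat.gcd_comm, Nat.gcd_eq_gcd_gcd_of_gcd_dvd h02]; ac_rfl
  | 2, 1, _ => rw [Nat.gcd_comm, Nat.gcd_eq_gcd_gcd_of_gcd_dvd h12]; ac_rfl
  | 0, 0, h | 1, 1, h | 2, 2, h => exact absurd rfl h

theorem stmt2 (V : Fin 3 → ℤ × ℤ) (hT : Noncollinear (V 0) (V 1) (V 2))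
    (ℓ : Fin 3 → ℕ) (hℓ : ∀ i, ℓ i = llen (V (i + 1)) (V (i + 2))) :
    ∀ i j, i ≠ j → Nat.gcd (ℓ i) (ℓ j) = Nat.gcd (ℓ 0) (Nat.gcd (ℓ 1) (ℓ 2)) :=
  stmt2_general V ℓ hℓ
end

section
/- If T is an acute lattice triangle whose sides have lattice lengths 1, 1, m for some positive integer m, then the orthocenter of T is not a lattice point. -/
/-!
Put `a = V₁ - V₂`, `b = V₀ - V₂`, `c = V₀ - V₁` and `σ = a × c = b × c`. Since `a` is primitive, a
lattice vector orthogonal to `a` is an integer multiple of `a` rotated by a right angle; applied to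
`H - V₀`, together with `(H - V₂) ⬝ c = 0`, this gives `σ ∣ b ⬝ c`, and likewise `σ ∣ a ⬝ c`.
Acuteness makes `a ⬝ c < 0 < b ⬝ c`, so `(a ⬝ c) (b ⬝ c) ≤ -σ²`, and the identity
`(a ⬝ b) (c ⬝ c) = (a ⬝ c) (b ⬝ c) + (a × c) (b × c)` forces `a ⬝ b ≤ 0`, contradicting the acute
angle at `V₂`.
-/

def crossv (u v : ℤ × ℤ) : ℤ := u.1 * v.2 - u.2 * v.1

def perp (u : ℤ × ℤ) : ℤ × ℤ := (-u.2, u.1)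

theorem dotv_comm (u v : ℤ × ℤ) : dotv u v = dotv v u := by
  simp only [dotv]; ring

theorem dotv_neg_right (u v : ℤ × ℤ) : dotv u (-v) = -dotv u v := by
  simp only [dotv, Prod.fst_neg, Prod.snd_neg]; ring

theorem dotv_sub_left (u v w : ℤ × ℤ) : dotv (u - v) w = dotv u w - dotv v w := by
  simp only [dotv, Prod.fst_sub, Prod.snd_sub]; ring

theorem dotv_smul_perp (k : ℤ) (u v : ℤ × ℤ) : dotv (k • perp u) v = k * crossv u v := by
  simp only [dotv, crossv, perp, Prod.smul_mk, smul_eq_mul]; ring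

theorem dotv_self_pos {u : ℤ × ℤ} (hu : u ≠ 0) : 0 < dotv u u := by
  obtain ⟨u₁, u₂⟩ := u
  have : u₁ ≠ 0 ∨ u₂ ≠ 0 := by simpa only [ne_eq, Prod.mk_eq_zero, not_and_or] using hu
  simp only [dotv]
  rcases this with h | h
  · linarith [mul_self_pos.mpr h, mul_self_nonneg u₂]
  · linarith [mul_self_pos.mpr h, mul_self_nonneg u₁]

theorem isAcute_iff {V₀ V₁ V₂ : ℤ × ℤ} :
    IsAcute V₀ V₁ V₂ ↔ 0 < dotv (V₀ - V₂) (V₀ - V₁) ∧ dotv (V₁ - V₂) (V₀ - V₁) < 0 ∧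
      0 < dotv (V₀ - V₂) (V₁ - V₂) := by
  simp only [IsAcute, dotv, Prod.fst_sub, Prod.snd_sub]
  constructor <;> rintro ⟨h₀, h₁, h₂⟩ <;> refine ⟨?_, ?_, ?_⟩ <;> linarith

theorem dotv_mul_dotv_add_crossv_mul_crossv (a b c : ℤ × ℤ) :
    dotv a c * dotv b c + crossv a c * crossv b c = dotv a b * dotv c c := by
  simp only [dotv, crossv]; ring

theorem exists_eq_smul_perp_of_dotv_eq_zero {a x : ℤ × ℤ} (ha : Int.gcd a.1 a.2 = 1)
    (hx : dotv x a = 0) : ∃ k : ℤ, x = k • perp a := by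
  obtain ⟨p, q, hpq⟩ := Int.isCoprime_iff_gcd_eq_one.mpr ha
  refine ⟨x.2 * p - x.1 * q, Prod.ext ?_ ?_⟩ <;>
    simp only [dotv, perp, Prod.smul_mk, smul_eq_mul] at hx ⊢
  · linear_combination p * hx - x.1 * hpq
  · linear_combination q * hx - x.2 * hpq

theorem crossv_dvd_dotv_of_dotv_eq_zero {a x : ℤ × ℤ} (ha : Int.gcd a.1 a.2 = 1)
    (hx : dotv x a = 0) (c : ℤ × ℤ) : crossv a c ∣ dotv x c := by
  obtain ⟨k, rfl⟩ := exists_eq_smul_perp_of_dotv_eq_zero ha hx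
  exact ⟨k, by rw [dotv_smul_perp, mul_comm]⟩

theorem crossv_dvd_dotv_of_llen_eq_one {H P Q R c : ℤ × ℤ} (hQR : llen Q R = 1)
    (hP : dotv (H - P) (Q - R) = 0) (hR : dotv (H - R) c = 0) :
    crossv (Q - R) c ∣ dotv (P - R) c := by
  have := crossv_dvd_dotv_of_dotv_eq_zero (a := Q - R) hQR hP c
  rwa [← sub_sub_sub_cancel_right H P R, dotv_sub_left, hR, zero_sub, dvd_neg] at this

theorem mul_le_neg_sq_of_dvd_of_mul_neg {s x y : ℤ} (hx : s ∣ x) (hy : s ∣ y) (hxy : x * y < 0) :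
    x * y ≤ -s ^ 2 := by
  obtain ⟨p, rfl⟩ := hx
  obtain ⟨q, rfl⟩ := hy
  have hsq : s * p * (s * q) = s ^ 2 * (p * q) := by ring
  rw [hsq] at hxy ⊢
  have hpq : p * q ≤ -1 := Int.le_sub_one_of_lt (neg_of_mul_neg_right hxy (sq_nonneg s))
  linarith [mul_le_mul_of_nonneg_left hpq (sq_nonneg s)]

theorem stmt7_general (V₀ V₁ V₂ : ℤ × ℤ)
    (hacute : IsAcute V₀ V₁ V₂)
    (h0 : llen V₁ V₂ = 1) (h1 : llen V₀ V₂ = 1) :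
    ¬ ∃ H : ℤ × ℤ, IsOrthocenter H V₀ V₁ V₂ := by
  rintro ⟨H, hH₀, hH₁, hH₂⟩
  obtain ⟨hA₀, hA₁, hA₂⟩ := isAcute_iff.mp hacute
  rw [← neg_sub V₀ V₂, dotv_neg_right, neg_eq_zero] at hH₁
  have hb : crossv (V₁ - V₂) (V₀ - V₁) ∣ dotv (V₀ - V₂) (V₀ - V₁) :=
    crossv_dvd_dotv_of_llen_eq_one h0 hH₀ hH₂
  have ha : crossv (V₀ - V₂) (V₀ - V₁) ∣ dotv (V₁ - V₂) (V₀ - V₁) :=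
    crossv_dvd_dotv_of_llen_eq_one h1 hH₁ hH₂
  have hσ : crossv (V₀ - V₂) (V₀ - V₁) = crossv (V₁ - V₂) (V₀ - V₁) := by
    simp only [crossv, Prod.fst_sub, Prod.snd_sub]; ring
  have hprod := mul_le_neg_sq_of_dvd_of_mul_neg (hσ ▸ ha) hb (mul_neg_of_neg_of_pos hA₁ hA₀)
  have hc : V₀ - V₁ ≠ 0 := fun h ↦ by simp [h, dotv] at hA₀
  have hid := dotv_mul_dotv_add_crossv_mul_crossv (V₁ - V₂) (V₀ - V₂) (V₀ - V₁)
  rw [hσ, dotv_comm (V₁ - V₂) (V₀ - V₂)] at hid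
  linarith [mul_pos hA₂ (dotv_self_pos hc)]

theorem stmt7 (V₀ V₁ V₂ : ℤ × ℤ) (m : ℕ) (hm : 0 < m)
    (hacute : IsAcute V₀ V₁ V₂)
    (h0 : llen V₁ V₂ = 1) (h1 : llen V₀ V₂ = 1) (h2 : llen V₀ V₁ = m) :
    ¬ ∃ H : ℤ × ℤ, IsOrthocenter H V₀ V₁ V₂ :=
  stmt7_general V₀ V₁ V₂ hacute h0 h1
end

section
/- Suppose a lattice triangle T has vertices O = (0,0), A, B and its circumcenter F is a lattice point. Then A and B each have both coordinates even or both coordinates odd, and the lattice perimeter of T is even. -/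
/-! Squared distances satisfy `|F - A|² = |F|² - 2 F·A + |A|²`, so a lattice point `F` equidistant
from `O` and `A` gives `|A|² = 2 F·A`: both coordinates of `A` have the same parity. Reducing mod 2,
`A ≡ (a, a)` and `B ≡ (b, b)`, and a lattice length `gcd(x, y)` is even exactly when `x` and `y`
both are; hence the parities of the three sides' lattice lengths are `a`, `b`, `a + b`, which sum
to an even number. -/

lemma dotv_sub_sub (u v : ℤ × ℤ) :
    dotv (u - v) (u - v) = dotv u u - 2 * dotv u v + dotv v v := by
  simp only [dotv, Prod.fst_sub, Prod.snd_sub]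
  ring

lemma even_dotv_self_of_dotv_sub_eq {F A : ℤ × ℤ} (h : dotv F F = dotv (F - A) (F - A)) :
    Even (dotv A A) :=
  ⟨dotv F A, by linear_combination -(h + dotv_sub_sub F A)⟩

lemma even_dotv_self_iff (v : ℤ × ℤ) : Even (dotv v v) ↔ Even (v.1 + v.2) := by
  simp only [dotv, Int.even_add, Int.even_mul, or_self]

lemma even_and_even_or_odd_and_odd_of_even_add {m n : ℤ} (h : Even (m + n)) :
    (Even m ∧ Even n) ∨ (Odd m ∧ Odd n) := by
  rw [Int.even_add] at h
  rcases Int.even_or_odd m with hm | hm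
  · exact Or.inl ⟨hm, h.mp hm⟩
  · exact Or.inr ⟨hm, Int.not_even_iff_odd.mp fun hn => Int.not_even_iff_odd.mpr hm (h.mpr hn)⟩

lemma even_llen_iff (P Q : ℤ × ℤ) :
    Even (llen P Q) ↔ Even (P.1 - Q.1) ∧ Even (P.2 - Q.2) := by
  simp only [llen, even_iff_two_dvd]
  exact Int.dvd_gcd_iff

lemma even_latPerim_origin {A B : ℤ × ℤ} (hA : Even (A.1 + A.2)) (hB : Even (B.1 + B.2)) :
    Even (latPerim (0, 0) A B) := by
  rw [Int.even_add] at hA hB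
  simp only [latPerim, Nat.even_add, even_llen_iff, Int.even_sub, zero_sub, even_neg]
  tauto

theorem stmt8_general (A B F : ℤ × ℤ)
    (hF : IsCircumcenter F (0, 0) A B) :
    ((Even A.1 ∧ Even A.2) ∨ (Odd A.1 ∧ Odd A.2)) ∧
    ((Even B.1 ∧ Even B.2) ∨ (Odd B.1 ∧ Odd B.2)) ∧
    Even (latPerim (0, 0) A B) := by
  obtain ⟨hOA, hOB⟩ := hF
  rw [Prod.mk_zero_zero, sub_zero] at hOA hOB
  have hA := (even_dotv_self_iff A).mp (even_dotv_self_of_dotv_sub_eq hOA)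
  have hB := (even_dotv_self_iff B).mp (even_dotv_self_of_dotv_sub_eq hOB)
  exact ⟨even_and_even_or_odd_and_odd_of_even_add hA, even_and_even_or_odd_and_odd_of_even_add hB,
    even_latPerim_origin hA hB⟩

theorem stmt8 (A B F : ℤ × ℤ) (hT : Noncollinear (0, 0) A B)
    (hF : IsCircumcenter F (0, 0) A B) :
    ((Even A.1 ∧ Even A.2) ∨ (Odd A.1 ∧ Odd A.2)) ∧
    ((Even B.1 ∧ Even B.2) ∨ (Odd B.1 ∧ Odd B.2)) ∧
    Even (latPerim (0, 0) A B) :=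
  stmt8_general A B F hF
end

section
/- If a lattice triangle has its circumcenter F on the lattice, then its area is an integer. -/
lemma key2 : ∀ x y u v : ZMod 2, x*x+y*y=0 → u*u+v*v=0 → x*v-u*y=0 := by decide

theorem stmt9 (V₀ V₁ V₂ F : ℤ × ℤ) (hT : Noncollinear V₀ V₁ V₂)
    (hF : IsCircumcenter F V₀ V₁ V₂) :
    ∃ K : ℤ, |(V₁.1 - V₀.1) * (V₂.2 - V₀.2) - (V₂.1 - V₀.1) * (V₁.2 - V₀.2)| = 2 * K := by
  obtain ⟨h1, h2⟩ := hF
  simp only [dotv, Prod.fst_sub, Prod.snd_sub] at h1 h2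
  have ha : (2:ℤ) ∣ ((V₁.1 - V₀.1)*(V₁.1 - V₀.1) + (V₁.2 - V₀.2)*(V₁.2 - V₀.2)) :=
    ⟨(F.1 - V₀.1)*(V₁.1 - V₀.1) + (F.2 - V₀.2)*(V₁.2 - V₀.2), by linear_combination -h1⟩
  have hb : (2:ℤ) ∣ ((V₂.1 - V₀.1)*(V₂.1 - V₀.1) + (V₂.2 - V₀.2)*(V₂.2 - V₀.2)) :=
    ⟨(F.1 - V₀.1)*(V₂.1 - V₀.1) + (F.2 - V₀.2)*(V₂.2 - V₀.2), by linear_combination -h2⟩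
  have ha' : (((V₁.1 - V₀.1 : ℤ) : ZMod 2))*((V₁.1 - V₀.1 : ℤ) : ZMod 2)
      + ((V₁.2 - V₀.2 : ℤ) : ZMod 2)*((V₁.2 - V₀.2 : ℤ) : ZMod 2) = 0 := by
    have := (ZMod.intCast_zmod_eq_zero_iff_dvd _ 2).mpr ha
    push_cast at this ⊢
    exact this
  have hb' : (((V₂.1 - V₀.1 : ℤ) : ZMod 2))*((V₂.1 - V₀.1 : ℤ) : ZMod 2)
      + ((V₂.2 - V₀.2 : ℤ) : ZMod 2)*((V₂.2 - V₀.2 : ℤ) : ZMod 2) = 0 := by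
    have := (ZMod.intCast_zmod_eq_zero_iff_dvd _ 2).mpr hb
    push_cast at this ⊢
    exact this
  have hkey := key2 _ _ _ _ ha' hb'
  have hc : (2:ℤ) ∣ ((V₁.1 - V₀.1) * (V₂.2 - V₀.2) - (V₂.1 - V₀.1) * (V₁.2 - V₀.2)) := by
    have := (ZMod.intCast_zmod_eq_zero_iff_dvd
      ((V₁.1 - V₀.1) * (V₂.2 - V₀.2) - (V₂.1 - V₀.1) * (V₁.2 - V₀.2)) 2).mp (by push_cast at hkey ⊢; exact hkey)
    exact_mod_cast this
  obtain ⟨K, hK⟩ := (dvd_abs _ _).mpr hc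
  exact ⟨K, hK⟩
end

section
/- Let T be a lattice triangle whose centroid is a lattice point. If the lattice length of one side of T is a multiple of 3, then the lattice lengths of all three sides of T are multiples of 3. -/
/-! Modulo 3, a side has lattice length divisible by 3 exactly when its endpoints agree in
`(ℤ/3)²`, and the centroid condition says that the three reduced vertices sum to `0`. In a group
of exponent 3, `a + b + b = 0` forces `a = b`, so once two reduced vertices agree, all three do. -/

def reduceMod (n : ℕ) (P : ℤ × ℤ) : ZMod n × ZMod n := (P.1, P.2)

lemma dvd_llen_iff (n : ℕ) (P Q : ℤ × ℤ) : n ∣ llen P Q ↔ reduceMod n P = reduceMod n Q := by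
  rw [llen, Int.dvd_gcd_iff, reduceMod, reduceMod, Prod.ext_iff,
    ZMod.intCast_eq_intCast_iff_dvd_sub, ZMod.intCast_eq_intCast_iff_dvd_sub,
    dvd_sub_comm, dvd_sub_comm (b := P.2)]

lemma eq_of_add_add_eq_zero {G : Type*} [AddCommGroup G] (h3 : ∀ x : G, 3 • x = 0) {a b : G}
    (h : a + b + b = 0) : a = b := by
  rw [← sub_eq_zero, show a - b = a + b + b - 3 • b by abel, h, h3, sub_zero]

lemma Fin.sum_univ_three_rotate {M : Type*} [AddCommMonoid M] (f : Fin 3 → M) (i : Fin 3) :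
    ∑ k, f k = f i + f (i + 1) + f (i + 2) := by
  rw [← Equiv.sum_comp (Equiv.addLeft i), Fin.sum_univ_three]
  simp only [Equiv.coe_addLeft, add_zero]

lemma eq_of_sum_eq_zero_of_eq {G : Type*} [AddCommGroup G] (h3 : ∀ x : G, 3 • x = 0)
    {W : Fin 3 → G} (hsum : ∑ k, W k = 0) {i : Fin 3} (hi : W (i + 1) = W (i + 2)) (k : Fin 3) :
    W k = W i := by
  have hi' : W i = W (i + 1) :=
    eq_of_add_add_eq_zero h3 (by rwa [Fin.sum_univ_three_rotate W i, ← hi] at hsum)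
  have hk : ∀ i k : Fin 3, k = i ∨ k = i + 1 ∨ k = i + 2 := by decide
  obtain rfl | rfl | rfl := hk i k
  · rfl
  · exact hi'.symm
  · exact (hi'.trans hi).symm

theorem stmt13_general (V : Fin 3 → ℤ × ℤ)
    (hG : (3 : ℤ) ∣ ((V 0).1 + (V 1).1 + (V 2).1) ∧ (3 : ℤ) ∣ ((V 0).2 + (V 1).2 + (V 2).2))
    (hside : ∃ i : Fin 3, 3 ∣ llen (V (i + 1)) (V (i + 2))) :
    ∀ i : Fin 3, 3 ∣ llen (V (i + 1)) (V (i + 2)) := by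
  have hsum : ∑ k, reduceMod 3 (V k) = 0 := by
    rw [Fin.sum_univ_three]
    ext <;> simp only [Prod.fst_add, Prod.snd_add, Prod.fst_zero, Prod.snd_zero, reduceMod]
    · exact_mod_cast (ZMod.intCast_zmod_eq_zero_iff_dvd _ 3).2 hG.1
    · exact_mod_cast (ZMod.intCast_zmod_eq_zero_iff_dvd _ 3).2 hG.2
  obtain ⟨i, hi⟩ := hside
  rw [dvd_llen_iff] at hi
  have hconst := eq_of_sum_eq_zero_of_eq (by decide) hsum hi
  intro j
  rw [dvd_llen_iff, hconst (j + 1), hconst (j + 2)]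

theorem stmt13 (V : Fin 3 → ℤ × ℤ) (hT : Noncollinear (V 0) (V 1) (V 2))
    (hG : (3 : ℤ) ∣ ((V 0).1 + (V 1).1 + (V 2).1) ∧ (3 : ℤ) ∣ ((V 0).2 + (V 1).2 + (V 2).2))
    (hside : ∃ i : Fin 3, 3 ∣ llen (V (i + 1)) (V (i + 2))) :
    ∀ i : Fin 3, 3 ∣ llen (V (i + 1)) (V (i + 2)) :=
  stmt13_general V hG hside
end

section
/- For every integer n ≥ 3, the lattice triangle with vertices O = (0,0), A = (n,0), B = (1,n−1) is acute, has lattice perimeter 2n, and its orthocenter is the lattice point (1,1). -/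
theorem stmt15 (n : ℤ) (hn : 3 ≤ n) :
    IsAcute (0, 0) (n, 0) (1, n - 1) ∧
    (latPerim (0, 0) (n, 0) (1, n - 1) : ℤ) = 2 * n ∧
    IsOrthocenter (1, 1) (0, 0) (n, 0) (1, n - 1) := by
  refine ⟨⟨?_, ?_, ?_⟩, ?_, ?_, ?_, ?_⟩ <;>
    simp only [IsAcute, IsOrthocenter, latPerim, llen, dotv, Prod.mk_sub_mk, Prod.fst, Prod.snd]
  · nlinarith
  · nlinarith
  · nlinarith
  · have h1 : Int.gcd (0 - n) (0 - 0) = n.natAbs := by simp [Int.gcd]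
    have h2 : Int.gcd (n - 1) (0 - (n - 1)) = (n-1).natAbs := by
      simp only [Int.gcd, show (0:ℤ) - (n-1) = -(n-1) by ring, Int.natAbs_neg, Nat.gcd_self]
    have h3 : Int.gcd (0 - 1) (0 - (n - 1)) = 1 := by simp [Int.gcd]
    rw [h1, h2, h3]
    push_cast [Int.natAbs_of_nonneg (by omega : (0:ℤ) ≤ n),
      Int.natAbs_of_nonneg (by omega : (0:ℤ) ≤ n - 1)]
    ring
  · ring
  · ring
  · ring
end

section
/- For every integer n ≥ 1, the triangle with vertices O = (0,0), A = (4n+2, 0), B = (4, 8n−4) is an acute lattice triangle with lattice perimeter 8n+4 whose circumcenter is the lattice point F = (2n+1, 4n−3); in particular |OF|² = |AF|² = |BF|² = 20n² − 20n + 10. -/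
lemma gcd_self_mul_cast (a k : ℤ) : (Int.gcd a (k * a) : ℤ) = |a| := by
  have h := Int.gcd_mul_right 1 a k
  rw [one_mul] at h
  rw [h]
  simp [Int.gcd, Int.natCast_natAbs]

theorem stmt16 (n : ℤ) (hn : 1 ≤ n) :
    IsAcute (0, 0) (4 * n + 2, 0) (4, 8 * n - 4) ∧
    (latPerim (0, 0) (4 * n + 2, 0) (4, 8 * n - 4) : ℤ) = 8 * n + 4 ∧
    IsCircumcenter (2 * n + 1, 4 * n - 3) (0, 0) (4 * n + 2, 0) (4, 8 * n - 4) ∧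
    dotv ((0, 0) - (2 * n + 1, 4 * n - 3)) ((0, 0) - (2 * n + 1, 4 * n - 3)) =
      20 * n ^ 2 - 20 * n + 10 := by
  have h1 : (llen (0, 0) (4 * n + 2, 0) : ℤ) = 4 * n + 2 := by
    show (Int.gcd ((0:ℤ) - (4 * n + 2)) ((0:ℤ) - 0) : ℤ) = _
    rw [show (0:ℤ) - 0 = 0 * ((0:ℤ) - (4 * n + 2)) by ring, gcd_self_mul_cast,
      abs_of_nonpos (by linarith)]
    ring
  have h2 : (llen (4 * n + 2, 0) (4, 8 * n - 4) : ℤ) = 4 * n - 2 := by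
    show (Int.gcd ((4 * n + 2 : ℤ) - 4) ((0:ℤ) - (8 * n - 4)) : ℤ) = _
    rw [show (0:ℤ) - (8 * n - 4) = (-2) * ((4 * n + 2 : ℤ) - 4) by ring,
      gcd_self_mul_cast, abs_of_nonneg (by linarith)]
    ring
  have h3 : (llen (0, 0) (4, 8 * n - 4) : ℤ) = 4 := by
    show (Int.gcd ((0:ℤ) - 4) ((0:ℤ) - (8 * n - 4)) : ℤ) = _
    rw [show (0:ℤ) - (8 * n - 4) = (2 * n - 1) * ((0:ℤ) - 4) by ring,
      gcd_self_mul_cast]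
    norm_num
  refine ⟨⟨?_, ?_, ?_⟩, ?_, ⟨?_, ?_⟩, ?_⟩
  · simp only [dotv, Prod.mk_sub_mk]; nlinarith
  · simp only [dotv, Prod.mk_sub_mk]; nlinarith
  · simp only [dotv, Prod.mk_sub_mk]; nlinarith [sq_nonneg (n - 1)]
  · unfold latPerim; push_cast; rw [h1, h2, h3]; ring
  · simp only [dotv, Prod.mk_sub_mk]; ring
  · simp only [dotv, Prod.mk_sub_mk]; ring
  · simp only [dotv, Prod.mk_sub_mk]; ring
end

section
/- Let T be a lattice triangle whose centroid G and orthocenter H are both lattice points, with one vertex at the origin and the other two vertices A = (x₁,y₁), B = (x₂,y₂). Then x₁, y₁, x₂, y₂ are all divisible by 3; consequently the lattice length of each side of T is a multiple of 3, and the lattice perimeter of T is a multiple of 3 and at least 9. -/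
lemma zmod3_key : ∀ a₁ b₁ a₂ b₂ h k : ZMod 3,
    a₁ + a₂ = 0 → b₁ + b₂ = 0 →
    h * (a₁ - a₂) + k * (b₁ - b₂) = 0 →
    (h - a₁) * a₂ + (k - b₁) * b₂ = 0 →
    (h - a₂) * a₁ + (k - b₂) * b₁ = 0 →
    a₁ = 0 ∧ b₁ = 0 ∧ a₂ = 0 ∧ b₂ = 0 := by decide

lemma dvd3_gcd {a b : ℤ} (ha : (3:ℤ) ∣ a) (hb : (3:ℤ) ∣ b) : 3 ∣ Int.gcd a b :=
  Nat.dvd_gcd (Int.natAbs_dvd_natAbs.mpr ha) (Int.natAbs_dvd_natAbs.mpr hb)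

theorem stmt19 (x₁ y₁ x₂ y₂ : ℤ) (hT : Noncollinear (0, 0) (x₁, y₁) (x₂, y₂))
    (hG : (3 : ℤ) ∣ (x₁ + x₂) ∧ (3 : ℤ) ∣ (y₁ + y₂))
    (hH : ∃ H : ℤ × ℤ, IsOrthocenter H (0, 0) (x₁, y₁) (x₂, y₂)) :
    (3 ∣ x₁ ∧ 3 ∣ y₁ ∧ 3 ∣ x₂ ∧ 3 ∣ y₂) ∧
    (3 ∣ llen (0, 0) (x₁, y₁) ∧ 3 ∣ llen (0, 0) (x₂, y₂) ∧ 3 ∣ llen (x₁, y₁) (x₂, y₂)) ∧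
    3 ∣ latPerim (0, 0) (x₁, y₁) (x₂, y₂) ∧
    9 ≤ latPerim (0, 0) (x₁, y₁) (x₂, y₂) := by
  obtain ⟨⟨h,k⟩, e1, e2, e3⟩ := hH
  simp only [IsOrthocenter, dotv, Prod.fst_sub, Prod.snd_sub] at e1 e2 e3
  obtain ⟨g1, g2⟩ := hG
  have g1' : ((x₁:ZMod 3) + x₂) = 0 := by
    have := (ZMod.intCast_zmod_eq_zero_iff_dvd (x₁+x₂) 3).mpr (by exact_mod_cast g1)
    push_cast at this; exact this
  have g2' : ((y₁:ZMod 3) + y₂) = 0 := by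
    have := (ZMod.intCast_zmod_eq_zero_iff_dvd (y₁+y₂) 3).mpr (by exact_mod_cast g2)
    push_cast at this; exact this
  have key := zmod3_key (x₁:ZMod 3) y₁ x₂ y₂ h k g1' g2'
    (by have := congrArg (Int.cast : ℤ → ZMod 3) e1; push_cast at this; linear_combination this)
    (by have := congrArg (Int.cast : ℤ → ZMod 3) e2; push_cast at this; linear_combination this)
    (by have := congrArg (Int.cast : ℤ → ZMod 3) e3; push_cast at this; linear_combination -this)
  have d1 : (3:ℤ) ∣ x₁ := by have := (ZMod.intCast_zmod_eq_zero_iff_dvd _ 3).mp (by exact_mod_cast key.1); exact_mod_cast this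
  have d2 : (3:ℤ) ∣ y₁ := by have := (ZMod.intCast_zmod_eq_zero_iff_dvd _ 3).mp (by exact_mod_cast key.2.1); exact_mod_cast this
  have d3 : (3:ℤ) ∣ x₂ := by have := (ZMod.intCast_zmod_eq_zero_iff_dvd _ 3).mp (by exact_mod_cast key.2.2.1); exact_mod_cast this
  have d4 : (3:ℤ) ∣ y₂ := by have := (ZMod.intCast_zmod_eq_zero_iff_dvd _ 3).mp (by exact_mod_cast key.2.2.2); exact_mod_cast this
  have l1 : 3 ∣ llen (0,0) (x₁,y₁) := dvd3_gcd (by simpa using d1.neg_right) (by simpa using d2.neg_right)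
  have l2 : 3 ∣ llen (0,0) (x₂,y₂) := dvd3_gcd (by simpa using d3.neg_right) (by simpa using d4.neg_right)
  have l3 : 3 ∣ llen (x₁,y₁) (x₂,y₂) := dvd3_gcd (dvd_sub d1 d3) (dvd_sub d2 d4)
  have nc : x₁ * y₂ - x₂ * y₁ ≠ 0 := by simpa [Noncollinear] using hT
  have p1 : llen (0,0) (x₁,y₁) ≠ 0 := by
    simp only [llen, Ne, Int.gcd_eq_zero_iff]; rintro ⟨h1, h2⟩; apply nc
    have hx : x₁ = 0 := by omega
    have hy : y₁ = 0 := by omega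
    rw [hx, hy]; ring
  have p2 : llen (0,0) (x₂,y₂) ≠ 0 := by
    simp only [llen, Ne, Int.gcd_eq_zero_iff]; rintro ⟨h1, h2⟩; apply nc
    have hx : x₂ = 0 := by omega
    have hy : y₂ = 0 := by omega
    rw [hx, hy]; ring
  have p3 : llen (x₁,y₁) (x₂,y₂) ≠ 0 := by
    simp only [llen, Ne, Int.gcd_eq_zero_iff]
    rintro ⟨h1, h2⟩
    apply nc
    have : x₁ = x₂ := by omega
    have : y₁ = y₂ := by omega
    subst_vars; ring
  refine ⟨⟨d1, d2, d3, d4⟩, ⟨l1, l2, l3⟩, ?_, ?_⟩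
  · exact dvd_add (dvd_add l1 l3) l2
  · unfold latPerim
    omega
end
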